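/- arXiv:2103.04416 — 2 statements merged into one kernel-verified Lean document; each statement's English description precedes it below -/
import Mathlib

section
/- For the learning rates α_t = (H+1)/(H+t) with H ≥ 1 and weights α_t^i := α_i · ∏_{j=i+1}^t (1 − α_j), for every t ≥ 1 it holds that 1/√t ≤ ∑_{i=1}^t α_t^i/√i ≤ 2/√t. -/
open Finset

noncomputable def lr (H : ℕ) (t : ℕ) : ℝ := ((H : ℝ) + 1) / ((H : ℝ) + t)

noncomputable def w (H : ℕ) (t i : ℕ) : ℝ :=
  lr H i * ∏ j ∈ Finset.Icc (i + 1) t, (1 - lr H j)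

noncomputable def w0 (H : ℕ) (t : ℕ) : ℝ :=
  ∏ j ∈ Finset.Icc 1 t, (1 - lr H j)

/-!
The weights satisfy `w H (t+1) i = (1 - α_{t+1}) w H t i` for `i ≤ t` and `w H t t = α_t`, with
`α_1 = 1`, so `S_t(f) := ∑ i ≤ t, w H t i f(i)` obeys `S_{t+1} = (1 - α_{t+1}) S_t + α_{t+1} f(t+1)`.
With `f = 1` the weights sum to one, and the lower bound is an average of values `1/√i ≥ 1/√t`.
The upper bound `S_t(1/√·) ≤ 2/√t` follows by induction from the same recursion: after clearing
denominators the step is `2 √t √(t+1) ≤ H + 2t + 1`, which is AM-GM.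
-/

lemma lr_nonneg (H t : ℕ) : 0 ≤ lr H t := by
  unfold lr
  positivity

lemma lr_le_one (H : ℕ) {t : ℕ} (ht : 1 ≤ t) : lr H t ≤ 1 := by
  unfold lr
  exact div_le_one_of_le₀ (by gcongr; exact_mod_cast ht) (by positivity)

lemma lr_one (H : ℕ) : lr H 1 = 1 := by
  rw [lr, Nat.cast_one]
  exact div_self (by positivity)

lemma lr_succ (H t : ℕ) : lr H (t + 1) = ((H : ℝ) + 1) / (H + t + 1) := by
  simp only [lr, Nat.cast_succ, add_assoc]

lemma one_sub_lr_succ (H t : ℕ) : 1 - lr H (t + 1) = (t : ℝ) / (H + t + 1) := by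
  rw [lr_succ]
  field_simp
  ring

lemma w_nonneg (H t i : ℕ) : 0 ≤ w H t i :=
  mul_nonneg (lr_nonneg H i) <| prod_nonneg fun j hj =>
    sub_nonneg.2 <| lr_le_one H (by simp only [mem_Icc] at hj; omega)

lemma w_self (H t : ℕ) : w H t t = lr H t := by
  rw [w, Icc_eq_empty (by omega), prod_empty, mul_one]

lemma w_succ (H : ℕ) {t i : ℕ} (hi : i ≤ t) :
    w H (t + 1) i = w H t i * (1 - lr H (t + 1)) := by
  rw [w, w, prod_Icc_succ_top (by omega), mul_assoc]

lemma sum_w_mul_succ (H t : ℕ) (f : ℕ → ℝ) :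
    ∑ i ∈ Icc 1 (t + 1), w H (t + 1) i * f i =
      (1 - lr H (t + 1)) * ∑ i ∈ Icc 1 t, w H t i * f i + lr H (t + 1) * f (t + 1) := by
  rw [sum_Icc_succ_top (by omega), w_self, mul_sum]
  congr 1
  refine sum_congr rfl fun i hi => ?_
  rw [w_succ H (mem_Icc.1 hi).2]
  ring

lemma sum_w_eq_one (H : ℕ) {t : ℕ} (ht : 1 ≤ t) : ∑ i ∈ Icc 1 t, w H t i = 1 := by
  induction t, ht using Nat.le_induction with
  | base => simp [w_self, lr_one]
  | succ t _ ih =>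
    simpa [ih] using sum_w_mul_succ H t fun _ => 1

lemma inv_sqrt_le_sum_w_div_sqrt (H t : ℕ) :
    1 / √t ≤ ∑ i ∈ Icc 1 t, w H t i / √i := by
  rcases t.eq_zero_or_pos with rfl | ht
  · simp
  calc 1 / √t = ∑ i ∈ Icc 1 t, w H t i / √t := by rw [← sum_div, sum_w_eq_one H ht]
    _ ≤ ∑ i ∈ Icc 1 t, w H t i / √i := sum_le_sum fun i hi => by
      have hi := mem_Icc.1 hi
      gcongr
      · exact w_nonneg H t i
      · exact Real.sqrt_pos.2 (by exact_mod_cast hi.1)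
      · exact_mod_cast hi.2

lemma div_mul_two_div_sqrt_add_le {H t : ℝ} (hH : 0 ≤ H) (ht : 0 ≤ t) :
    t / (H + t + 1) * (2 / √t) + (H + 1) / (H + t + 1) * (√(t + 1))⁻¹ ≤ 2 / √(t + 1) := by
  have hu : √(t + 1) ^ 2 = t + 1 := Real.sq_sqrt (by positivity)
  have hamgm := two_mul_le_add_sq (√t) (√(t + 1))
  rw [Real.sq_sqrt ht, hu] at hamgm
  have hsqrt : t / (H + t + 1) * (2 / √t) = 2 * √t / (H + t + 1) :=
    calc _ = 2 * (t / √t) / (H + t + 1) := by ring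
      _ = _ := by rw [Real.div_sqrt]
  have hdiff : 2 / √(t + 1) - (2 * √t / (H + t + 1) + (H + 1) / (H + t + 1) * (√(t + 1))⁻¹)
      = (H + 2 * t + 1 - 2 * √t * √(t + 1)) / ((H + t + 1) * √(t + 1)) := by
    have : 0 < √(t + 1) := Real.sqrt_pos.2 (by positivity)
    field_simp
    ring
  rw [hsqrt, ← sub_nonneg, hdiff]
  exact div_nonneg (by linarith) (by positivity)

lemma sum_w_div_sqrt_le (H t : ℕ) : ∑ i ∈ Icc 1 t, w H t i / √i ≤ 2 / √t := by
  induction t with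
  | zero => simp
  | succ t ih =>
    simp only [div_eq_mul_inv] at ih ⊢
    rw [sum_w_mul_succ]
    calc (1 - lr H (t + 1)) * ∑ i ∈ Icc 1 t, w H t i * (√i)⁻¹ + lr H (t + 1) * (√(t + 1 : ℕ))⁻¹
        ≤ (1 - lr H (t + 1)) * (2 * (√t)⁻¹) + lr H (t + 1) * (√(t + 1 : ℕ))⁻¹ := by
          gcongr
          exact sub_nonneg.2 (lr_le_one H (by omega))
      _ ≤ 2 * (√(t + 1 : ℕ))⁻¹ := by
          rw [one_sub_lr_succ, lr_succ, Nat.cast_succ]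
          simpa only [div_eq_mul_inv] using
            div_mul_two_div_sqrt_add_le (H.cast_nonneg : (0 : ℝ) ≤ H) t.cast_nonneg

theorem weighted_inv_sqrt_bounds_general (H : ℕ) (t : ℕ) :
    1 / Real.sqrt t ≤ ∑ i ∈ Finset.Icc 1 t, w H t i / Real.sqrt i ∧
    ∑ i ∈ Finset.Icc 1 t, w H t i / Real.sqrt i ≤ 2 / Real.sqrt t :=
  ⟨inv_sqrt_le_sum_w_div_sqrt H t, sum_w_div_sqrt_le H t⟩

theorem weighted_inv_sqrt_bounds (H : ℕ) (hH : 1 ≤ H) (t : ℕ) (ht : 1 ≤ t) :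
    1 / Real.sqrt t ≤ ∑ i ∈ Finset.Icc 1 t, w H t i / Real.sqrt i ∧
    ∑ i ∈ Finset.Icc 1 t, w H t i / Real.sqrt i ≤ 2 / Real.sqrt t :=
  weighted_inv_sqrt_bounds_general H t
end

section
/- For the learning rates α_t = (H+1)/(H+t) with H ≥ 1 and weights α_t^i := α_i · ∏_{j=i+1}^t (1 − α_j), for every fixed i ≥ 1 the infinite series over t converges with ∑_{t=i}^∞ α_t^i = 1 + 1/H. -/
/-!
Write `P n = ∏_{j=i+1}^{i+n} (1 - α_j)`, so that `α_{i+n}^i = α_i P n`, and `1 - α_j = (j-1)/(H+j)`.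
The sequence `s n = (H+i+n) P n` satisfies `s (n+1) = (i+n) P n`, hence `s n - s (n+1) = H P n`:
the weights telescope, `α_{i+n}^i = α_i/H · (s n - s (n+1))`, and the series sums to
`α_i/H · (s 0 - lim s) = α_i (H+i)/H = 1 + 1/H` once `s n → 0`. The decay comes from
`(i+n+1) s (n+1) = (i+n+1)(i+n) P n ≤ (i+n) s n` (this is where `H ≥ 1` enters), so `(i+n) s n`
is bounded by `i (H+i)` and `s n = O(1/n)`.
-/

open Finset

open Filter Topology

theorem hasSum_sub_succ_of_antitone {f : ℕ → ℝ} {l : ℝ} (hf : Antitone f)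
    (hl : Tendsto f atTop (𝓝 l)) : HasSum (fun n => f n - f (n + 1)) (f 0 - l) := by
  rw [hasSum_iff_tendsto_nat_of_nonneg fun n => sub_nonneg.2 (hf n.le_succ)]
  simp_rw [Finset.sum_range_sub']
  exact hl.const_sub _

lemma one_sub_lr {H j : ℕ} (hj : (H : ℝ) + j ≠ 0) :
    1 - lr H j = ((j : ℝ) - 1) / (H + j) := by
  unfold lr
  field_simp
  ring

lemma one_sub_lr_nonneg (H : ℕ) {j : ℕ} (hj : 1 ≤ j) : 0 ≤ 1 - lr H j := by
  have hj' : (1 : ℝ) ≤ j := by exact_mod_cast hj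
  rw [sub_nonneg, lr, div_le_one (by positivity)]
  linarith

noncomputable def tailProd (H i n : ℕ) : ℝ := ∏ j ∈ Icc (i + 1) (i + n), (1 - lr H j)

noncomputable def scaledTailProd (H i n : ℕ) : ℝ := ((H : ℝ) + i + n) * tailProd H i n

section TailProd

variable (H i : ℕ)

lemma tailProd_zero : tailProd H i 0 = 1 := by
  simp [tailProd]

lemma tailProd_succ (n : ℕ) : tailProd H i (n + 1) = tailProd H i n * (1 - lr H (i + n + 1)) := by
  rw [tailProd, ← add_assoc, prod_Icc_succ_top (by omega), tailProd]

lemma tailProd_nonneg (n : ℕ) : 0 ≤ tailProd H i n :=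
  prod_nonneg fun j hj => one_sub_lr_nonneg H (by simp at hj; omega)

lemma scaledTailProd_nonneg (n : ℕ) : 0 ≤ scaledTailProd H i n :=
  mul_nonneg (by positivity) (tailProd_nonneg H i n)

lemma scaledTailProd_zero : scaledTailProd H i 0 = H + i := by
  simp [scaledTailProd, tailProd_zero]

lemma scaledTailProd_succ (n : ℕ) : scaledTailProd H i (n + 1) = (i + n) * tailProd H i n := by
  have hpos : (0 : ℝ) < H + (i + n + 1 : ℕ) := by positivity
  rw [scaledTailProd, tailProd_succ, one_sub_lr hpos.ne']
  push_cast at hpos ⊢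
  field_simp
  ring

lemma scaledTailProd_sub_succ (n : ℕ) :
    scaledTailProd H i n - scaledTailProd H i (n + 1) = H * tailProd H i n := by
  rw [scaledTailProd_succ, scaledTailProd]
  ring

lemma scaledTailProd_antitone : Antitone (scaledTailProd H i) :=
  antitone_nat_of_succ_le fun n => by
    rw [← sub_nonneg, scaledTailProd_sub_succ]
    exact mul_nonneg (Nat.cast_nonneg H) (tailProd_nonneg H i n)

lemma natCast_add_mul_scaledTailProd_antitone (hH : 1 ≤ H) :
    Antitone fun n : ℕ => ((i : ℝ) + n) * scaledTailProd H i n := by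
  have hH' : (1 : ℝ) ≤ H := by exact_mod_cast hH
  refine antitone_nat_of_succ_le fun n => ?_
  have hP := tailProd_nonneg H i n
  calc ((i : ℝ) + (n + 1 : ℕ)) * scaledTailProd H i (n + 1)
      = (i + n) * ((i + n + 1) * tailProd H i n) := by rw [scaledTailProd_succ]; push_cast; ring
    _ ≤ (i + n) * ((H + i + n) * tailProd H i n) := by
          have hfactor : (i : ℝ) + n + 1 ≤ H + i + n := by linarith
          gcongr
    _ = (i + n) * scaledTailProd H i n := rfl

lemma tendsto_scaledTailProd (hH : 1 ≤ H) : Tendsto (scaledTailProd H i) atTop (𝓝 0) := by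
  refine squeeze_zero' (Eventually.of_forall fun n => ?_) ?_
    (tendsto_const_div_atTop_nhds_zero_nat ((i : ℝ) * (H + i)))
  · exact scaledTailProd_nonneg H i n
  · filter_upwards [eventually_gt_atTop 0] with n hn
    have hbound : ((i : ℝ) + n) * scaledTailProd H i n ≤ i * (H + i) := by
      simpa [scaledTailProd_zero] using
        natCast_add_mul_scaledTailProd_antitone H i hH (Nat.zero_le n)
    have hs := scaledTailProd_nonneg H i n
    rw [le_div_iff₀ (by exact_mod_cast hn)]
    nlinarith [mul_nonneg (Nat.cast_nonneg i) hs]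

end TailProd

theorem sum_weights_over_t_general (H : ℕ) (hH : 1 ≤ H) (i : ℕ) :
    HasSum (fun n : ℕ => w H (i + n) i) (1 + 1 / (H : ℝ)) := by
  have hH0 : (H : ℝ) ≠ 0 := by positivity
  have hweight : (fun n => w H (i + n) i) =
      fun n => lr H i / H * (scaledTailProd H i n - scaledTailProd H i (n + 1)) := by
    funext n
    rw [scaledTailProd_sub_succ, ← mul_assoc, div_mul_cancel₀ _ hH0]
    rfl
  have hlimit : lr H i / H * (scaledTailProd H i 0 - 0) = 1 + 1 / H := by
    have : (H : ℝ) + i ≠ 0 := by positivity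
    rw [scaledTailProd_zero, sub_zero, lr]
    field_simp
  rw [hweight, ← hlimit]
  exact (hasSum_sub_succ_of_antitone (scaledTailProd_antitone H i)
    (tendsto_scaledTailProd H i hH)).mul_left _

theorem sum_weights_over_t (H : ℕ) (hH : 1 ≤ H) (i : ℕ) (hi : 1 ≤ i) :
    HasSum (fun n : ℕ => w H (i + n) i) (1 + 1 / (H : ℝ)) :=
  sum_weights_over_t_general H hH i
end
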